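/- arXiv:2005.09307 — 4 statements merged into one kernel-verified Lean document; each statement's English description precedes it below -/
import Mathlib

section
/- Let n ≥ 2 be an integer with k = ω(n). If there exists a prime q dividing n whose multiplicity a in the prime factorization of n satisfies a ≥ 1 + M(k)/log q, then σ(n)/n < e^γ · log(log n), regardless of the multiplicities of the other prime divisors of n. -/
open Real Finset

/-- `Nk k` is the `k`-th primorial: the product of the first `k` primes
(`Nat.nth Nat.Prime i` is the `(i+1)`-st prime, so `Nat.nth Nat.Prime 0 = 2`). -/
noncomputable def Nk (k : ℕ) : ℕ := ∏ i ∈ Finset.range k, Nat.nth Nat.Prime i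

/-- `M k = exp (e^(-γ) * N_k / φ(N_k)) - log N_k`. -/
noncomputable def M (k : ℕ) : ℝ :=
  Real.exp (Real.exp (-Real.eulerMascheroniConstant) * (Nk k : ℝ) / (Nat.totient (Nk k) : ℝ))
    - Real.log (Nk k)

/-!
By multiplicativity, `σ(n)/n < ∏_{p ∣ n} p/(p-1)`, and since `x/(x-1)` decreases while the
`i`-th smallest prime factor of `n` is at least `p_i`, this product is at most
`N_k/φ(N_k)` with `k = ω(n)`. On the other hand `n ≥ q^(a-1) · ∏_{p ∣ n} p ≥ q^(a-1) · N_k`, so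
the hypothesis on `a` gives `log n ≥ M(k) + log N_k = exp (e^{-γ} N_k/φ(N_k))`, i.e.
`e^γ log log n ≥ N_k/φ(N_k)`.
-/

section NthPrime

open Nat

lemma nth_le_orderEmbOfFin {P : ℕ → Prop} [DecidablePred P] (hP : (Set.ofPred P).Infinite)
    {s : Finset ℕ} (hs : ∀ x ∈ s, P x) {k : ℕ} (h : s.card = k) (i : Fin k) :
    nth P i ≤ s.orderEmbOfFin h i := by
  set f := s.orderEmbOfFin h
  have hfP : ∀ j, P (f j) := fun j => hs _ (s.orderEmbOfFin_mem h j)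
  have hcount : (i : ℕ) ≤ count P (f i) := by
    rw [count_eq_card_filter_range]
    have hsub : (Iio i).image f ⊆ {x ∈ range (f i) | P x} := by
      intro x hx
      obtain ⟨j, hj, rfl⟩ := mem_image.mp hx
      exact mem_filter.mpr ⟨mem_range.mpr (f.strictMono (mem_Iio.mp hj)), hfP j⟩
    calc (i : ℕ) = ((Iio i).image f).card := by
          rw [card_image_of_injective _ f.injective, Fin.card_Iio]
      _ ≤ _ := card_le_card hsub
  calc nth P i ≤ nth P (count P (f i)) := (nth_le_nth hP).mpr hcount
    _ = f i := nth_count (hfP i)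

variable {R : Type*} [CommMonoidWithZero R] [Preorder R] [ZeroLEOneClass R] [PosMulMono R]
  {s : Finset ℕ} {f : ℕ → R}

lemma prod_range_nth_prime_le_prod (hs : ∀ p ∈ s, p.Prime)
    (hf₀ : ∀ i, 0 ≤ f (nth Nat.Prime i)) (hf : MonotoneOn f {p | p.Prime}) :
    ∏ i ∈ range s.card, f (nth Nat.Prime i) ≤ ∏ p ∈ s, f p := by
  conv_rhs =>
    rw [← image_orderEmbOfFin_univ s rfl, prod_image (s.orderEmbOfFin rfl).injective.injOn]
  rw [← Fin.prod_univ_eq_prod_range]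
  exact prod_le_prod (fun i _ => hf₀ i) fun i _ =>
    hf (prime_nth_prime i) (hs _ (s.orderEmbOfFin_mem rfl i))
      (nth_le_orderEmbOfFin infinite_setOfPred_prime hs rfl i)

lemma prod_le_prod_range_nth_prime (hs : ∀ p ∈ s, p.Prime)
    (hf₀ : ∀ p ∈ s, 0 ≤ f p) (hf : AntitoneOn f {p | p.Prime}) :
    ∏ p ∈ s, f p ≤ ∏ i ∈ range s.card, f (nth Nat.Prime i) := by
  conv_lhs =>
    rw [← image_orderEmbOfFin_univ s rfl, prod_image (s.orderEmbOfFin rfl).injective.injOn]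
  rw [← Fin.prod_univ_eq_prod_range]
  exact prod_le_prod (fun i _ => hf₀ _ (s.orderEmbOfFin_mem rfl i)) fun i _ =>
    hf (prime_nth_prime i) (hs _ (s.orderEmbOfFin_mem rfl i))
      (nth_le_orderEmbOfFin infinite_setOfPred_prime hs rfl i)

end NthPrime

lemma div_sub_one_antitoneOn_prime : AntitoneOn (fun p : ℕ => (p : ℝ) / (p - 1)) {p | p.Prime} := by
  intro p hp q hq hpq
  have hp2 : (2 : ℝ) ≤ p := by exact_mod_cast hp.two_le
  have hpq' : (p : ℝ) ≤ q := by exact_mod_cast hpq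
  rw [div_le_div_iff₀ (by linarith) (by linarith)]
  linarith

lemma sigma_one_prime_pow_div_lt {p : ℕ} (hp : p.Prime) (a : ℕ) :
    (ArithmeticFunction.sigma 1 (p ^ a) : ℝ) / p ^ a < p / (p - 1) := by
  have hp1 : (1 : ℝ) < p := by exact_mod_cast hp.one_lt
  have hgeom : (ArithmeticFunction.sigma 1 (p ^ a) : ℝ) = ((p : ℝ) ^ (a + 1) - 1) / (p - 1) := by
    rw [ArithmeticFunction.sigma_one_apply_prime_pow hp, ← geom_sum_eq hp1.ne']
    push_cast
    rfl
  rw [hgeom, div_div, div_lt_div_iff₀ (by positivity) (by linarith), pow_succ]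
  nlinarith [pow_pos (zero_lt_one.trans hp1) a]

lemma sigma_one_div_lt_prod_primeFactors {n : ℕ} (hn : 2 ≤ n) :
    (ArithmeticFunction.sigma 1 n : ℝ) / n < ∏ p ∈ n.primeFactors, (p : ℝ) / (p - 1) := by
  have hn0 : n ≠ 0 := by omega
  have hσ : (ArithmeticFunction.sigma 1 n : ℝ) =
      ∏ p ∈ n.primeFactors, (ArithmeticFunction.sigma 1 (p ^ n.factorization p) : ℝ) := by
    rw [ArithmeticFunction.isMultiplicative_sigma.multiplicative_factorization _ hn0]
    push_cast
    rfl
  have hnR : (n : ℝ) = ∏ p ∈ n.primeFactors, (p : ℝ) ^ n.factorization p := by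
    exact_mod_cast Nat.prod_primeFactors_pow_factorization hn0
  rw [hσ, hnR, ← prod_div_distrib]
  refine prod_lt_prod_of_nonempty (fun p hp => ?_) (fun p hp => ?_)
    (Nat.nonempty_primeFactors.mpr (by omega))
  · have := (Nat.prime_of_mem_primeFactors hp).pos
    have : 0 < ArithmeticFunction.sigma 1 (p ^ n.factorization p) :=
      ArithmeticFunction.sigma_pos_iff.mpr (by positivity)
    positivity
  · exact sigma_one_prime_pow_div_lt (Nat.prime_of_mem_primeFactors hp) _

lemma div_totient_eq_prod_primeFactors {n : ℕ} (hn : n ≠ 0) :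
    (n : ℝ) / n.totient = ∏ p ∈ n.primeFactors, (p : ℝ) / (p - 1) := by
  have hφ : (n.totient : ℝ) = n * ∏ p ∈ n.primeFactors, (1 - (p : ℝ)⁻¹) := by
    simpa using congrArg (Rat.cast : ℚ → ℝ) (Nat.totient_eq_mul_prod_factors n)
  rw [hφ, div_mul_cancel_left₀ (by exact_mod_cast hn), ← prod_inv_distrib]
  refine prod_congr rfl fun p hp => ?_
  have : (1 : ℝ) < p := by exact_mod_cast (Nat.prime_of_mem_primeFactors hp).one_lt
  field_simp

lemma Nk_pos (k : ℕ) : 0 < Nk k :=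
  prod_pos fun i _ => (Nat.prime_nth_prime i).pos

lemma primeFactors_Nk (k : ℕ) : (Nk k).primeFactors = (range k).image (Nat.nth Nat.Prime) := by
  have h := prod_image (f := fun p : ℕ => p) (s := range k)
    fun i _ j _ hij => Nat.nth_injective Nat.infinite_setOfPred_prime hij
  rw [Nk, ← h]
  exact Nat.primeFactors_prod fun p hp => by
    obtain ⟨i, -, rfl⟩ := mem_image.mp hp
    exact Nat.prime_nth_prime i

lemma Nk_div_totient (k : ℕ) :
    (Nk k : ℝ) / (Nk k).totient =
      ∏ i ∈ range k, (Nat.nth Nat.Prime i : ℝ) / (Nat.nth Nat.Prime i - 1) := by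
  rw [div_totient_eq_prod_primeFactors (Nk_pos k).ne', primeFactors_Nk,
    prod_image fun i _ j _ hij => Nat.nth_injective Nat.infinite_setOfPred_prime hij]

lemma Nk_card_le_prod {s : Finset ℕ} (hs : ∀ p ∈ s, p.Prime) : Nk s.card ≤ ∏ p ∈ s, p :=
  prod_range_nth_prime_le_prod (f := fun p => p) hs (fun _ => Nat.zero_le _) fun _ _ _ _ h => h

lemma sigma_one_div_lt_Nk_div_totient {n : ℕ} (hn : 2 ≤ n) :
    (ArithmeticFunction.sigma 1 n : ℝ) / n <
      (Nk n.primeFactors.card : ℝ) / (Nk n.primeFactors.card).totient := by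
  have hprime : ∀ p ∈ n.primeFactors, p.Prime := fun p hp => Nat.prime_of_mem_primeFactors hp
  calc (ArithmeticFunction.sigma 1 n : ℝ) / n
      < ∏ p ∈ n.primeFactors, (p : ℝ) / (p - 1) := sigma_one_div_lt_prod_primeFactors hn
    _ ≤ ∏ i ∈ range n.primeFactors.card, (Nat.nth Nat.Prime i : ℝ) / (Nat.nth Nat.Prime i - 1) :=
        prod_le_prod_range_nth_prime hprime
          (fun p hp => div_nonneg (Nat.cast_nonneg p)
            (sub_nonneg.mpr (by exact_mod_cast (hprime p hp).one_le)))
          div_sub_one_antitoneOn_prime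
    _ = _ := (Nk_div_totient _).symm

lemma one_le_factorization_of_mem_primeFactors {n p : ℕ} (hp : p ∈ n.primeFactors) :
    1 ≤ n.factorization p :=
  Nat.pos_of_ne_zero (Finsupp.mem_support_iff.mp (by rwa [Nat.support_factorization]))

lemma pow_factorization_sub_one_mul_prod_primeFactors_le {n q : ℕ} (hq : q ∈ n.primeFactors) :
    q ^ (n.factorization q - 1) * ∏ p ∈ n.primeFactors, p ≤ n := by
  have hn := (Nat.mem_primeFactors.mp hq).2.2
  calc q ^ (n.factorization q - 1) * ∏ p ∈ n.primeFactors, p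
      ≤ (∏ p ∈ n.primeFactors, p ^ (n.factorization p - 1)) * ∏ p ∈ n.primeFactors, p := by
        gcongr
        exact single_le_prod' (f := fun p => p ^ (n.factorization p - 1))
          (fun p hp => Nat.one_le_pow _ _ (Nat.pos_of_mem_primeFactors hp)) hq
    _ = ∏ p ∈ n.primeFactors, p ^ n.factorization p := by
        rw [← prod_mul_distrib]
        refine prod_congr rfl fun p hp => ?_
        rw [← pow_succ, Nat.sub_add_cancel (one_le_factorization_of_mem_primeFactors hp)]
    _ = n := (Nat.prod_primeFactors_pow_factorization hn).symm

lemma exp_Nk_div_totient_le_log {n q : ℕ} (hq : q ∈ n.primeFactors)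
    (hM : M n.primeFactors.card ≤ ((n.factorization q : ℝ) - 1) * Real.log q) :
    Real.exp (Real.exp (-Real.eulerMascheroniConstant) * Nk n.primeFactors.card /
      (Nk n.primeFactors.card).totient) ≤ Real.log n := by
  set k := n.primeFactors.card
  have hq0 : (0 : ℝ) < q := by exact_mod_cast Nat.pos_of_mem_primeFactors hq
  have hNk0 : (0 : ℝ) < Nk k := by exact_mod_cast Nk_pos k
  have hlower : (q : ℝ) ^ (n.factorization q - 1) * Nk k ≤ n := by
    exact_mod_cast (Nat.mul_le_mul_left _ (Nk_card_le_prod fun p hp =>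
      Nat.prime_of_mem_primeFactors hp)).trans
        (pow_factorization_sub_one_mul_prod_primeFactors_le hq)
  calc _ = M k + Real.log (Nk k) := by rw [M]; ring
    _ ≤ Real.log ((q : ℝ) ^ (n.factorization q - 1) * Nk k) := by
        rw [Real.log_mul (by positivity) hNk0.ne', Real.log_pow,
          Nat.cast_sub (one_le_factorization_of_mem_primeFactors hq), Nat.cast_one]
        linarith
    _ ≤ Real.log n := Real.log_le_log (by positivity) hlower

theorem robin_of_large_multiplicity (n : ℕ) (hn : 2 ≤ n)
    (q : ℕ) (hq : q.Prime) (hqn : q ∣ n)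
    (ha : (1 : ℝ) + M n.primeFactors.card / Real.log q ≤ (n.factorization q : ℝ)) :
    (ArithmeticFunction.sigma 1 n : ℝ) / n <
      Real.exp Real.eulerMascheroniConstant * Real.log (Real.log n) := by
  set k := n.primeFactors.card
  have hqn' : q ∈ n.primeFactors := hq.mem_primeFactors hqn (by omega)
  have hM : M k ≤ ((n.factorization q : ℝ) - 1) * Real.log q := by
    have hlogq : 0 < Real.log q := Real.log_pos (by exact_mod_cast hq.one_lt)
    rw [← div_le_iff₀ hlogq]
    linarith
  have hexp := exp_Nk_div_totient_le_log hqn' hM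
  have hloglog : Real.exp (-Real.eulerMascheroniConstant) * Nk k / (Nk k).totient ≤
      Real.log (Real.log n) :=
    (Real.le_log_iff_exp_le ((Real.exp_pos _).trans_le hexp)).mpr hexp
  calc (ArithmeticFunction.sigma 1 n : ℝ) / n < Nk k / (Nk k).totient :=
        sigma_one_div_lt_Nk_div_totient hn
    _ = Real.exp Real.eulerMascheroniConstant *
          (Real.exp (-Real.eulerMascheroniConstant) * Nk k / (Nk k).totient) := by
        rw [← mul_div_assoc, ← mul_assoc, ← Real.exp_add, add_neg_cancel, Real.exp_zero, one_mul]
    _ ≤ Real.exp Real.eulerMascheroniConstant * Real.log (Real.log n) := by gcongr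
end

section
/- Let p be a prime number and let q be any prime number with q < p(p+1). Then for all positive integers a and b, (σ(p^{a+1})/p^{a+1}) / (σ(p^a)/p^a) < σ(q^b)/q^b. -/
open Real Finset

lemma sig_prime_pow {p : ℕ} (hp : p.Prime) (k : ℕ) :
    ArithmeticFunction.sigma 1 (p ^ k) = ∑ i ∈ Finset.range (k + 1), p ^ i := by
  rw [ArithmeticFunction.sigma_apply, Nat.sum_divisors_prime_pow hp]
  simp

lemma key_nat {p q : ℕ} (hp : 1 < p) (hq : 1 < q) (hqp : q < p * (p + 1))
    (a b : ℕ) (ha : 0 < a) (hb : 0 < b) :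
    (∑ i ∈ Finset.range (a + 2), p ^ i) * p ^ a * q ^ b <
      (∑ i ∈ Finset.range (b + 1), q ^ i) *
        (p ^ (a + 1) * ∑ i ∈ Finset.range (a + 1), p ^ i) := by
  obtain ⟨a', rfl⟩ := Nat.exists_eq_add_of_le ha
  obtain ⟨b', rfl⟩ := Nat.exists_eq_add_of_le hb
  set s := ∑ i ∈ Finset.range (1 + a' + 1), p ^ i with hs
  have h1 : ∑ i ∈ Finset.range (1 + a' + 2), p ^ i = 1 + p * s := by
    rw [show 1 + a' + 2 = 1 + a' + 1 + 1 from rfl, geom_sum_succ]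
    ring
  -- s ≥ p + 1
  have hs1 : p + 1 ≤ s := by
    have h0 : p ^ 0 + p ^ 1 ≤ s := by
      rw [hs]
      have : ({0, 1} : Finset ℕ) ⊆ Finset.range (1 + a' + 1) := by
        intro x hx
        simp only [Finset.mem_insert, Finset.mem_singleton] at hx
        simp only [Finset.mem_range]
        omega
      calc p ^ 0 + p ^ 1 = ∑ i ∈ ({0, 1} : Finset ℕ), p ^ i := by simp
        _ ≤ _ := Finset.sum_le_sum_of_subset this
    simpa [add_comm] using h0
  -- t ≥ q^b + q^(b-1)
  set t := ∑ i ∈ Finset.range (1 + b' + 1), q ^ i with ht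
  have ht1 : q ^ b' + q ^ (1 + b') ≤ t := by
    rw [ht]
    have : ({b', 1 + b'} : Finset ℕ) ⊆ Finset.range (1 + b' + 1) := by
      intro x hx
      simp only [Finset.mem_insert, Finset.mem_singleton] at hx
      simp only [Finset.mem_range]
      omega
    calc q ^ b' + q ^ (1 + b') = ∑ i ∈ ({b', 1 + b'} : Finset ℕ), q ^ i := by
          rw [Finset.sum_insert (by simp), Finset.sum_singleton]
      _ ≤ _ := Finset.sum_le_sum_of_subset this
  rw [h1]
  have hqb : q ^ (1 + b') = q * q ^ b' := by rw [pow_add, pow_one]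
  have hpa : p ^ (1 + a' + 1) = p * p ^ (1 + a') := by ring
  rw [hqb, hpa]
  set x := p ^ (1 + a') with hx
  set y := q ^ b' with hy
  have hx0 : 0 < x := pow_pos (by omega) _
  have hy0 : 0 < y := pow_pos (by omega) _
  -- goal : (1 + p * s) * x * (q * y) < t * (p * x * s)
  have hqs : q < p * s := lt_of_lt_of_le hqp (by nlinarith)
  calc (1 + p * s) * x * (q * y) = ((1 + p * s) * q) * (x * y) := by ring
    _ < ((q + 1) * (p * s)) * (x * y) := by
        have : (1 + p * s) * q < (q + 1) * (p * s) := by nlinarith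
        exact (Nat.mul_lt_mul_right (Nat.mul_pos hx0 hy0)).mpr this
    _ = (y + q * y) * (p * x * s) := by ring
    _ ≤ t * (p * x * s) := Nat.mul_le_mul_right _ (by omega)

theorem sigma_ratio_consecutive_powers_lt (p q : ℕ) (hp : p.Prime) (hq : q.Prime)
    (hqp : q < p * (p + 1)) (a b : ℕ) (ha : 0 < a) (hb : 0 < b) :
    ((ArithmeticFunction.sigma 1 (p ^ (a + 1)) : ℝ) / (p ^ (a + 1) : ℝ)) /
        ((ArithmeticFunction.sigma 1 (p ^ a) : ℝ) / (p ^ a : ℝ)) <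
      (ArithmeticFunction.sigma 1 (q ^ b) : ℝ) / (q ^ b : ℝ) := by
  have hp1 := hp.one_lt
  have hq1 := hq.one_lt
  have hA := sig_prime_pow hp (a + 1)
  have hB := sig_prime_pow hp a
  have hC := sig_prime_pow hq b
  set A := ArithmeticFunction.sigma 1 (p ^ (a + 1)) with hAdef
  set B := ArithmeticFunction.sigma 1 (p ^ a) with hBdef
  set C := ArithmeticFunction.sigma 1 (q ^ b) with hCdef
  have hB0 : 0 < B := by
    rw [hB]
    exact Finset.sum_pos (fun i _ => pow_pos (by omega) i) Finset.nonempty_range_add_one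
  have hC0 : 0 < C := by
    rw [hC]
    exact Finset.sum_pos (fun i _ => pow_pos (by omega) i) Finset.nonempty_range_add_one
  have hpa : (0:ℝ) < (p:ℝ) ^ a := by positivity
  have hpa1 : (0:ℝ) < (p:ℝ) ^ (a + 1) := by positivity
  have hqb : (0:ℝ) < (q:ℝ) ^ b := by positivity
  have hBr : (0:ℝ) < (B:ℝ) := by exact_mod_cast hB0
  have e : ((A:ℝ) / (p:ℝ) ^ (a + 1)) / ((B:ℝ) / (p:ℝ) ^ a)
      = ((A:ℝ) * (p:ℝ) ^ a) / ((p:ℝ) ^ (a + 1) * (B:ℝ)) := by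
    field_simp
  rw [e, div_lt_div_iff₀ (by positivity) hqb]
  have key := key_nat hp1 hq1 hqp a b ha hb
  rw [← hA, ← hB, ← hC] at key
  exact_mod_cast key
end

section
/- For every integer n ≥ 2, σ(n)/n < N_{ω(n)}/φ(N_{ω(n)}). -/
open Real Finset

/-- ratio function -/
noncomputable def rf (p : ℕ) : ℝ := (p : ℝ) / ((p : ℝ) - 1)

lemma rf_pos {p : ℕ} (hp : 2 ≤ p) : 0 < rf p := by
  unfold rf
  have : (1:ℝ) < p := by exact_mod_cast hp
  apply div_pos <;> linarith

lemma rf_anti {p q : ℕ} (hp : 2 ≤ p) (hpq : p ≤ q) : rf q ≤ rf p := by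
  unfold rf
  have h1 : (1:ℝ) < p := by exact_mod_cast hp
  have h2 : (p:ℝ) ≤ q := by exact_mod_cast hpq
  rw [div_le_div_iff₀ (by linarith) (by linarith)]
  nlinarith

lemma Nk_ratio (k : ℕ) :
    (Nk k : ℝ) / (Nat.totient (Nk k) : ℝ) = ∏ i ∈ Finset.range k, rf (Nat.nth Nat.Prime i) := by
  induction k with
  | zero => simp [Nk]
  | succ k ih =>
    have hprime : ∀ i, (Nat.nth Nat.Prime i).Prime := fun i =>
      Nat.nth_mem_of_infinite Nat.infinite_setOf_prime i
    have hcop : Nat.Coprime (Nk k) (Nat.nth Nat.Prime k) := by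
      apply Nat.Coprime.prod_left
      intro i hi
      rw [Nat.coprime_primes (hprime i) (hprime k)]
      exact ne_of_lt ((Nat.nth_lt_nth Nat.infinite_setOf_prime).mpr (Finset.mem_range.mp hi))
    have hNk : Nk (k+1) = Nk k * Nat.nth Nat.Prime k := Finset.prod_range_succ _ _
    have htot : Nat.totient (Nk (k+1)) = Nat.totient (Nk k) * (Nat.nth Nat.Prime k - 1) := by
      rw [hNk, Nat.totient_mul hcop, Nat.totient_prime (hprime k)]
    have hNkpos : 0 < Nk k := Finset.prod_pos fun i _ => (hprime i).pos
    have htotpos : (0:ℝ) < Nat.totient (Nk k) := by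
      exact_mod_cast Nat.totient_pos.mpr hNkpos
    have hp2 : 2 ≤ Nat.nth Nat.Prime k := (hprime k).two_le
    have hcast : ((Nat.nth Nat.Prime k - 1 : ℕ) : ℝ) = (Nat.nth Nat.Prime k : ℝ) - 1 := by
      have := hp2; push_cast [Nat.cast_sub (by omega : 1 ≤ Nat.nth Nat.Prime k)]; ring
    rw [Finset.prod_range_succ, ← ih, htot, hNk]
    push_cast
    rw [hcast]
    have hq1 : (1:ℝ) < Nat.nth Nat.Prime k := by exact_mod_cast hp2
    unfold rf
    field_simp

lemma prod_rf_le {S : Finset ℕ} (hS : ∀ p ∈ S, p.Prime) :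
    ∏ p ∈ S, rf p ≤ ∏ i ∈ Finset.range S.card, rf (Nat.nth Nat.Prime i) := by
  classical
  set k := S.card with hk
  have hprime : ∀ i, (Nat.nth Nat.Prime i).Prime := fun i =>
    Nat.nth_mem_of_infinite Nat.infinite_setOf_prime i
  set F : Finset ℕ := (Finset.range k).image (Nat.nth Nat.Prime) with hF
  have hinj : Function.Injective (Nat.nth Nat.Prime) :=
    (Nat.nth_strictMono Nat.infinite_setOf_prime).injective
  have hFcard : F.card = k := by
    rw [hF, Finset.card_image_of_injective _ hinj, Finset.card_range]
  have hFprod : ∏ i ∈ Finset.range k, rf (Nat.nth Nat.Prime i) = ∏ p ∈ F, rf p := by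
    rw [hF, Finset.prod_image (fun a _ b _ h => hinj h)]
  rw [hFprod]
  -- split
  rw [← Finset.prod_inter_mul_prod_diff S F rf, ← Finset.prod_inter_mul_prod_diff F S rf,
    Finset.inter_comm F S]
  have hcardeq : (S \ F).card = (F \ S).card :=
    Finset.card_sdiff_comm (by rw [hFcard])
  set c : ℝ := rf (Nat.nth Nat.Prime k) with hc
  have hcpos : 0 < c := rf_pos (hprime k).two_le
  have h1 : ∏ p ∈ S \ F, rf p ≤ c ^ (S \ F).card := by
    rw [← Finset.prod_const]
    apply Finset.prod_le_prod
    · intro p hp; exact (rf_pos (hS p (Finset.mem_sdiff.mp hp).1).two_le).le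
    · intro p hp
      obtain ⟨hpS, hpF⟩ := Finset.mem_sdiff.mp hp
      have hpp := hS p hpS
      have hj : Nat.nth Nat.Prime (Nat.count Nat.Prime p) = p := Nat.nth_count hpp
      have hjk : k ≤ Nat.count Nat.Prime p := by
        by_contra h
        push_neg at h
        exact hpF (Finset.mem_image.mpr ⟨_, Finset.mem_range.mpr h, hj⟩)
      have : Nat.nth Nat.Prime k ≤ p := by
        rw [← hj]; exact (Nat.nth_le_nth Nat.infinite_setOf_prime).mpr hjk
      exact rf_anti (hprime k).two_le this
  have h2 : c ^ (F \ S).card ≤ ∏ p ∈ F \ S, rf p := by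
    rw [← Finset.prod_const]
    apply Finset.prod_le_prod
    · intro p hp; exact hcpos.le
    · intro p hp
      obtain ⟨hpF, _⟩ := Finset.mem_sdiff.mp hp
      obtain ⟨i, hi, rfl⟩ := Finset.mem_image.mp hpF
      exact rf_anti (hprime i).two_le
        ((Nat.nth_le_nth Nat.infinite_setOf_prime).mpr (Finset.mem_range.mp hi).le)
  have h3 : ∏ p ∈ S \ F, rf p ≤ ∏ p ∈ F \ S, rf p := by
    calc ∏ p ∈ S \ F, rf p ≤ c ^ (S \ F).card := h1
    _ = c ^ (F \ S).card := by rw [hcardeq]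
    _ ≤ ∏ p ∈ F \ S, rf p := h2
  have hposint : 0 < ∏ p ∈ S ∩ F, rf p :=
    Finset.prod_pos fun p hp => rf_pos (hS p (Finset.mem_inter.mp hp).1).two_le
  exact mul_le_mul_of_nonneg_left h3 hposint.le

theorem sigma_ratio_lt_primorial_ratio (n : ℕ) (hn : 2 ≤ n) :
    (ArithmeticFunction.sigma 1 n : ℝ) / n <
      (Nk n.primeFactors.card : ℝ) / (Nat.totient (Nk n.primeFactors.card) : ℝ) := by
  have hn0 : n ≠ 0 := by omega
  have hSne : n.primeFactors.Nonempty := Nat.nonempty_primeFactors.mpr (by omega)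
  have hsig : (ArithmeticFunction.sigma 1 n : ℝ) =
      ∏ p ∈ n.primeFactors, ∑ k ∈ Finset.range (n.factorization p + 1), (p:ℝ) ^ k := by
    rw [ArithmeticFunction.sigma_one_apply, Nat.sum_divisors hn0]
    push_cast
    rfl
  have hnprod : (n : ℝ) = ∏ p ∈ n.primeFactors, (p:ℝ) ^ (n.factorization p) := by
    have h := Nat.factorization_prod_pow_eq_self hn0
    rw [Finsupp.prod, Nat.support_factorization] at h
    conv_lhs => rw [← h]
    push_cast
    rfl
  have hstep : (ArithmeticFunction.sigma 1 n : ℝ) / n < ∏ p ∈ n.primeFactors, rf p := by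
    rw [hsig, hnprod, ← Finset.prod_div_distrib]
    apply Finset.prod_lt_prod_of_nonempty _ _ hSne
    · intro p hp
      have hp2 : 2 ≤ p := (Nat.prime_of_mem_primeFactors hp).two_le
      have h1 : (1:ℝ) < p := by exact_mod_cast hp2
      apply div_pos
      · apply Finset.sum_pos (fun i _ => by positivity)
        exact Finset.nonempty_range_add_one
      · positivity
    · intro p hp
      have hp2 : 2 ≤ p := (Nat.prime_of_mem_primeFactors hp).two_le
      have h1 : (1:ℝ) < p := by exact_mod_cast hp2
      set a := n.factorization p
      unfold rf
      rw [div_lt_div_iff₀ (by positivity) (by linarith)]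
      have hgeom : (∑ k ∈ Finset.range (a + 1), (p:ℝ) ^ k) * ((p:ℝ) - 1)
          = (p:ℝ) ^ (a+1) - 1 := geom_sum_mul _ _
      rw [hgeom]
      have : (p:ℝ) * (p:ℝ)^a = (p:ℝ)^(a+1) := by ring
      rw [this]
      linarith
  calc (ArithmeticFunction.sigma 1 n : ℝ) / n < ∏ p ∈ n.primeFactors, rf p := hstep
  _ ≤ ∏ i ∈ Finset.range n.primeFactors.card, rf (Nat.nth Nat.Prime i) :=
      prod_rf_le fun p hp => Nat.prime_of_mem_primeFactors hp
  _ = (Nk n.primeFactors.card : ℝ) / (Nat.totient (Nk n.primeFactors.card) : ℝ) :=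
      (Nk_ratio _).symm
end

section
/- Multiplicity Permutation theorem: Let p < q be prime numbers, let a, b be positive integers, and let m be a positive integer coprime to both p and q. Set n = p^a · q^b · m and n* = p^b · q^a · m. If a < b, then n* < n and σ(n*)/n* > σ(n)/n; if a > b, then n* > n and σ(n*)/n* < σ(n)/n. -/
open Real Finset

/-!
`σ(n)/n` is multiplicative and `σ(p^k)/p^k = G_(k+1)(1/p)`, where `G_n(t) = ∑_{i<n} t^i`. So the
abundancy claim says that `G_(b+1)/G_(a+1)` is larger at `1/p` than at `1/q`, i.e. that `G_N/G_n` is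
strictly increasing on `[0, ∞)` for `0 < n < N`. As `G_N = G_n + t^n G_(N-n)`, this reduces to
`t ↦ t^n / G_n(t)` being strictly increasing, i.e. `y^n G_n(x) < x^n G_n(y)` for `0 ≤ y < x`, which
holds term by term.
-/

section GeomSum

variable {R : Type*} [CommSemiring R] [LinearOrder R] [IsStrictOrderedRing R] {x y : R}

theorem pow_mul_geom_sum_lt (hy : 0 ≤ y) (hyx : y < x) {n : ℕ} (hn : 0 < n) :
    y ^ n * ∑ i ∈ range n, x ^ i < x ^ n * ∑ i ∈ range n, y ^ i := by
  have hx : 0 ≤ x := hy.trans hyx.le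
  rw [mul_sum, mul_sum]
  refine sum_lt_sum (fun i hi => ?_) ⟨0, mem_range.2 hn, by simpa using pow_lt_pow_left₀ hyx hy hn.ne'⟩
  obtain ⟨j, rfl⟩ := Nat.exists_eq_add_of_le (mem_range.1 hi).le
  calc y ^ (i + j) * x ^ i = y ^ j * (x ^ i * y ^ i) := by ring
    _ ≤ x ^ j * (x ^ i * y ^ i) := by gcongr
    _ = x ^ (i + j) * y ^ i := by ring

theorem geom_sum_mul_geom_sum_lt (hy : 0 ≤ y) (hyx : y < x) {n N : ℕ} (hn : 0 < n) (hnN : n < N) :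
    (∑ i ∈ range n, x ^ i) * ∑ i ∈ range N, y ^ i <
      (∑ i ∈ range N, x ^ i) * ∑ i ∈ range n, y ^ i := by
  obtain ⟨k, rfl⟩ := Nat.exists_eq_add_of_lt hnN
  have split (t : R) : ∑ i ∈ range (n + k + 1), t ^ i =
      ∑ i ∈ range n, t ^ i + t ^ n * ∑ i ∈ range (k + 1), t ^ i := by
    rw [add_assoc, sum_range_add, mul_sum]
    simp only [pow_add]
  rw [split, split, mul_add, add_mul, add_lt_add_iff_left]
  set Sx := ∑ i ∈ range n, x ^ i
  set Sy := ∑ i ∈ range n, y ^ i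
  set Tx := ∑ i ∈ range (k + 1), x ^ i
  set Ty := ∑ i ∈ range (k + 1), y ^ i
  have hTy : 0 < Ty := geom_sum_pos hy k.succ_ne_zero
  have hTyx : Ty ≤ Tx := sum_le_sum fun i _ => pow_le_pow_left₀ hy hyx.le i
  calc Sx * (y ^ n * Ty) = y ^ n * Sx * Ty := by ring
    _ < x ^ n * Sy * Ty := mul_lt_mul_of_pos_right (pow_mul_geom_sum_lt hy hyx hn) hTy
    _ ≤ x ^ n * Sy * Tx := by
      gcongr
      exact mul_nonneg (pow_nonneg (hy.trans hyx.le) n) (geom_sum_pos hy hn.ne').le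
    _ = x ^ n * Tx * Sy := by ring

end GeomSum

namespace Nat

open ArithmeticFunction
open scoped ArithmeticFunction.sigma

theorem abundancyIndex_eq_sigma_div (n : ℕ) : n.abundancyIndex = σ 1 n / n := by
  rw [abundancyIndex, sigma_one_apply, cast_sum]

theorem cast_abundancyIndex {K : Type*} [DivisionRing K] [CharZero K] (n : ℕ) :
    (n.abundancyIndex : K) = σ 1 n / n := by
  rw [abundancyIndex_eq_sigma_div, Rat.cast_div, Rat.cast_natCast, Rat.cast_natCast]

theorem abundancyIndex_pos {n : ℕ} (hn : 0 < n) : 0 < n.abundancyIndex := by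
  rw [abundancyIndex_eq_sigma_div]
  exact _root_.div_pos (cast_pos.2 (sigma_pos 1 n hn.ne')) (cast_pos.2 hn)

theorem Coprime.abundancyIndex_mul {m n : ℕ} (h : Coprime m n) :
    (m * n).abundancyIndex = m.abundancyIndex * n.abundancyIndex := by
  simp only [abundancyIndex_eq_sigma_div, isMultiplicative_sigma.map_mul_of_coprime h, cast_mul,
    mul_div_mul_comm]

theorem Prime.abundancyIndex_pow {p : ℕ} (hp : p.Prime) (k : ℕ) :
    (p ^ k).abundancyIndex = ∑ i ∈ range (k + 1), (p : ℚ)⁻¹ ^ i := by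
  have hp0 : (p : ℚ) ≠ 0 := mod_cast hp.ne_zero
  rw [abundancyIndex_eq_sigma_div, sigma_one_apply_prime_pow hp, cast_sum, sum_div,
    ← sum_range_reflect]
  refine sum_congr rfl fun i hi => ?_
  rw [add_tsub_cancel_right, cast_pow, cast_pow, pow_sub₀ _ hp0 (mem_range_succ_iff.1 hi), inv_pow]
  field_simp

theorem abundancyIndex_prime_pow_mul_lt {p q : ℕ} (hp : p.Prime) (hq : q.Prime) (hpq : p < q)
    {a b : ℕ} (hab : a < b) :
    (p ^ a).abundancyIndex * (q ^ b).abundancyIndex <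
      (p ^ b).abundancyIndex * (q ^ a).abundancyIndex := by
  simp only [hp.abundancyIndex_pow, hq.abundancyIndex_pow]
  have hqp : (q : ℚ)⁻¹ < (p : ℚ)⁻¹ := inv_strictAnti₀ (mod_cast hp.pos) (mod_cast hpq)
  exact geom_sum_mul_geom_sum_lt (by positivity) hqp a.succ_pos (succ_lt_succ hab)

theorem abundancyIndex_lt_of_swap_exponents {p q m : ℕ} (hp : p.Prime) (hq : q.Prime) (hpq : p < q)
    (hm : 0 < m) (hmp : Coprime m p) (hmq : Coprime m q) {a b : ℕ} (hab : a < b) :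
    (p ^ a * q ^ b * m).abundancyIndex < (p ^ b * q ^ a * m).abundancyIndex := by
  have hpq' : ∀ x y, Coprime (p ^ x) (q ^ y) := fun x y =>
    ((coprime_primes hp hq).2 hpq.ne).pow x y
  have hm' : ∀ x y, Coprime (p ^ x * q ^ y) m := fun x y =>
    (hmp.symm.pow_left x).mul_left (hmq.symm.pow_left y)
  rw [(hm' a b).abundancyIndex_mul, (hm' b a).abundancyIndex_mul, (hpq' a b).abundancyIndex_mul,
    (hpq' b a).abundancyIndex_mul]
  exact mul_lt_mul_of_pos_right (abundancyIndex_prime_pow_mul_lt hp hq hpq hab) (abundancyIndex_pos hm)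

end Nat

theorem pow_mul_pow_lt_pow_mul_pow {p q a b : ℕ} (hp : 0 < p) (hpq : p < q) (hab : a < b) :
    p ^ b * q ^ a < p ^ a * q ^ b := by
  have hq : 0 < q := hp.trans hpq
  obtain ⟨k, rfl⟩ := Nat.exists_eq_add_of_lt hab
  calc p ^ (a + k + 1) * q ^ a = p ^ a * q ^ a * p ^ (k + 1) := by ring
    _ < p ^ a * q ^ a * q ^ (k + 1) := by gcongr
    _ = p ^ a * q ^ (a + k + 1) := by ring

theorem multiplicity_permutation_general (p q : ℕ) (hp : p.Prime) (hq : q.Prime) (hpq : p < q)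
    (a b : ℕ)
    (m : ℕ) (hm : 0 < m) (hmp : Nat.Coprime m p) (hmq : Nat.Coprime m q) :
    (a < b →
      p ^ b * q ^ a * m < p ^ a * q ^ b * m ∧
      (ArithmeticFunction.sigma 1 (p ^ a * q ^ b * m) : ℝ) / (p ^ a * q ^ b * m : ℝ) <
        (ArithmeticFunction.sigma 1 (p ^ b * q ^ a * m) : ℝ) / (p ^ b * q ^ a * m : ℝ)) ∧
    (b < a →
      p ^ a * q ^ b * m < p ^ b * q ^ a * m ∧
      (ArithmeticFunction.sigma 1 (p ^ b * q ^ a * m) : ℝ) / (p ^ b * q ^ a * m : ℝ) <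
        (ArithmeticFunction.sigma 1 (p ^ a * q ^ b * m) : ℝ) / (p ^ a * q ^ b * m : ℝ)) := by
  have swap {a b : ℕ} (hab : a < b) :
      p ^ b * q ^ a * m < p ^ a * q ^ b * m ∧
      (ArithmeticFunction.sigma 1 (p ^ a * q ^ b * m) : ℝ) / (p ^ a * q ^ b * m : ℝ) <
        (ArithmeticFunction.sigma 1 (p ^ b * q ^ a * m) : ℝ) / (p ^ b * q ^ a * m : ℝ) := by
    refine ⟨Nat.mul_lt_mul_of_pos_right (pow_mul_pow_lt_pow_mul_pow hp.pos hpq hab) hm, ?_⟩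
    have h : ((p ^ a * q ^ b * m).abundancyIndex : ℝ) < (p ^ b * q ^ a * m).abundancyIndex :=
      mod_cast Nat.abundancyIndex_lt_of_swap_exponents hp hq hpq hm hmp hmq hab
    simpa only [Nat.cast_abundancyIndex, Nat.cast_mul, Nat.cast_pow] using h
  exact ⟨swap, swap⟩

theorem multiplicity_permutation (p q : ℕ) (hp : p.Prime) (hq : q.Prime) (hpq : p < q)
    (a b : ℕ) (ha : 0 < a) (hb : 0 < b)
    (m : ℕ) (hm : 0 < m) (hmp : Nat.Coprime m p) (hmq : Nat.Coprime m q) :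
    (a < b →
      p ^ b * q ^ a * m < p ^ a * q ^ b * m ∧
      (ArithmeticFunction.sigma 1 (p ^ a * q ^ b * m) : ℝ) / (p ^ a * q ^ b * m : ℝ) <
        (ArithmeticFunction.sigma 1 (p ^ b * q ^ a * m) : ℝ) / (p ^ b * q ^ a * m : ℝ)) ∧
    (b < a →
      p ^ a * q ^ b * m < p ^ b * q ^ a * m ∧
      (ArithmeticFunction.sigma 1 (p ^ b * q ^ a * m) : ℝ) / (p ^ b * q ^ a * m : ℝ) <
        (ArithmeticFunction.sigma 1 (p ^ a * q ^ b * m) : ℝ) / (p ^ a * q ^ b * m : ℝ)) :=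
  multiplicity_permutation_general p q hp hq hpq a b m hm hmp hmq
end
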